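/- Let G be a finite simple graph and G1 its Barycentric refinement. Then for every k≥0, the number of k-dimensional simplices of G1 equals Σ_{j≥1} f_{j−1}(G) · S(j,k+1) · (k+1)!, where f_{j−1}(G) is the number of simplices of G with j vertices and S(j,k+1) is the Stirling number of the second kind. -/
import Mathlib


open scoped Classical

/-- A finite simple graph: a finite vertex set together with a symmetric, irreflexive
adjacency relation supported on the vertex set. -/
structure FGraph (V : Type) where
  verts : Finset V
  Adj : V → V → Prop
  symm : ∀ {a b}, Adj a b → Adj b a
  loopless : ∀ a, ¬ Adj a a
  mem_of_adj : ∀ {a b}, Adj a b → a ∈ verts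

namespace FGraph

variable {V W : Type}

/-- The subgraph induced on the vertices satisfying `P`. -/
noncomputable def induce (G : FGraph V) (P : V → Prop) : FGraph V where
  verts := G.verts.filter P
  Adj a b := G.Adj a b ∧ P a ∧ P b
  symm h := ⟨G.symm h.1, h.2.2, h.2.1⟩
  loopless a h := G.loopless a h.1
  mem_of_adj h := Finset.mem_filter.mpr ⟨G.mem_of_adj h.1, h.2.1⟩

/-- The unit sphere of a vertex: the subgraph induced on its neighbors. -/
noncomputable def unitSphere (G : FGraph V) (v : V) : FGraph V :=
  G.induce (fun w => G.Adj v w)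

/-- The graph with the vertex `v` (and its edges) removed. -/
noncomputable def erase (G : FGraph V) (v : V) : FGraph V :=
  G.induce (fun w => w ≠ v)

/-- Inductive definition of contractibility: the one-point graph is contractible, and a
graph is contractible if some vertex has a contractible unit sphere and contractible
complement. -/
inductive Contractible : FGraph V → Prop
  | single (G : FGraph V) (v : V) (h : G.verts = {v}) : Contractible G
  | step (G : FGraph V) (v : V) (hv : v ∈ G.verts)
      (h1 : Contractible (G.unitSphere v)) (h2 : Contractible (G.erase v)) :
      Contractible G

mutual
  /-- `G` is a `d`-sphere: the empty graph is the `(-1)`-sphere, and a `d`-manifold is a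
  `d`-sphere if removing some vertex renders it contractible. -/
  inductive IsSphere : ℤ → FGraph V → Prop
    | empty (G : FGraph V) (h : G.verts = ∅) : IsSphere (-1) G
    | punctured (d : ℤ) (G : FGraph V) (hm : IsManifold d G) (v : V) (hv : v ∈ G.verts)
        (hc : Contractible (G.erase v)) : IsSphere d G
  /-- For `d ≥ 0`, `G` is a `d`-manifold iff every unit sphere is a `(d-1)`-sphere. -/
  inductive IsManifold : ℤ → FGraph V → Prop
    | intro (d : ℤ) (hd : 0 ≤ d) (G : FGraph V)
        (h : ∀ v ∈ G.verts, IsSphere (d - 1) (G.unitSphere v)) : IsManifold d G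
end

/-- A simplex of `G`: the vertex set of a complete subgraph. -/
def IsSimplex (G : FGraph V) (x : Finset V) : Prop :=
  x.Nonempty ∧ ↑x ⊆ G.verts ∧ ∀ a ∈ x, ∀ b ∈ x, a ≠ b → G.Adj a b

/-- The Barycentric refinement: vertices are the simplices of `G`, two being adjacent iff
one is strictly contained in the other. -/
noncomputable def barycentric (G : FGraph V) : FGraph (Finset V) where
  verts := G.verts.powerset.filter (fun x => G.IsSimplex x)
  Adj x y := G.IsSimplex x ∧ G.IsSimplex y ∧ (x ⊂ y ∨ y ⊂ x)
  symm h := ⟨h.2.1, h.1, h.2.2.symm⟩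
  loopless x h := by rcases h.2.2 with h' | h' <;> exact (ssubset_irrefl x h')
  mem_of_adj h := Finset.mem_filter.mpr ⟨Finset.mem_powerset.mpr h.1.2.1, h.1⟩

/-- Number of simplices of `G` with exactly `j` vertices (so `numSimplices G (k+1)` is
the `f`-vector entry `f_k(G)`). -/
noncomputable def numSimplices (G : FGraph V) (j : ℕ) : ℕ :=
  (G.verts.powerset.filter (fun x => G.IsSimplex x ∧ x.card = j)).card

/-- Euler characteristic `χ(G) = Σ_{k ≥ 0} (-1)^k f_k(G)`, where `f_k` counts the
simplices with `k+1` vertices. -/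
noncomputable def euler (G : FGraph V) : ℤ :=
  ∑ k ∈ Finset.range G.verts.card, (-1 : ℤ) ^ k * G.numSimplices (k + 1)

/-- The level set `{f = c}`: the subgraph of the Barycentric refinement induced by the
simplices on which `f - c` changes sign. -/
noncomputable def levelSet (G : FGraph V) (f : V → ℝ) (c : ℝ) : FGraph (Finset V) :=
  G.barycentric.induce (fun x => (∃ a ∈ x, f a - c < 0) ∧ (∃ b ∈ x, 0 < f b - c))

/-- Graph isomorphism. -/
def Iso (G : FGraph V) (H : FGraph W) : Prop :=
  ∃ φ : V → W, Set.BijOn φ ↑G.verts ↑H.verts ∧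
    ∀ a ∈ G.verts, ∀ b ∈ G.verts, (G.Adj a b ↔ H.Adj (φ a) (φ b))

/-- Zykov join of two graphs: disjoint union plus all edges between the two parts. -/
noncomputable def join (G : FGraph V) (H : FGraph W) : FGraph (V ⊕ W) where
  verts := G.verts.disjSum H.verts
  Adj a b :=
    match a, b with
    | .inl a, .inl b => G.Adj a b
    | .inr a, .inr b => H.Adj a b
    | .inl a, .inr b => a ∈ G.verts ∧ b ∈ H.verts
    | .inr a, .inl b => b ∈ G.verts ∧ a ∈ H.verts
  symm {a b} h := by
    cases a <;> cases b <;> simp_all <;> first | exact G.symm h | exact H.symm h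
  loopless a h := by
    cases a <;> simp_all <;> first | exact G.loopless _ h | exact H.loopless _ h
  mem_of_adj {a b} h := by
    cases a <;> cases b <;> simp_all [Finset.mem_disjSum] <;>
      first | exact G.mem_of_adj h | exact H.mem_of_adj h

/-- Union of two graphs on the same vertex type. -/
noncomputable def union (G H : FGraph V) : FGraph V where
  verts := G.verts ∪ H.verts
  Adj a b := G.Adj a b ∨ H.Adj a b
  symm h := h.imp G.symm H.symm
  loopless a h := h.elim (G.loopless a) (H.loopless a)
  mem_of_adj h :=
    h.elim (fun h' => Finset.mem_union_left _ (G.mem_of_adj h'))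
      (fun h' => Finset.mem_union_right _ (H.mem_of_adj h'))

/-- A `d`-ball: a graph of the form `S - v` for a `d`-sphere `S` and a vertex `v` of `S`
(up to graph isomorphism). -/
def IsBall (d : ℤ) (H : FGraph W) : Prop :=
  ∃ (S : FGraph ℕ) (v : ℕ), IsSphere d S ∧ v ∈ S.verts ∧ Iso H (S.erase v)

/-- A `d`-manifold with boundary: every unit sphere is a `(d-1)`-sphere or a `(d-1)`-ball. -/
def IsManifoldWithBoundary (d : ℤ) (G : FGraph V) : Prop :=
  ∀ v ∈ G.verts, IsSphere (d - 1) (G.unitSphere v) ∨ IsBall (d - 1) (G.unitSphere v)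

/-- The cyclic graph `C_n` on the vertex set `Fin n`. -/
def cycleGraph (n : ℕ) : FGraph (Fin n) where
  verts := Finset.univ
  Adj a b := a ≠ b ∧ ((a.val + 1) % n = b.val ∨ (b.val + 1) % n = a.val)
  symm h := ⟨h.1.symm, h.2.symm⟩
  loopless a h := h.1 rfl
  mem_of_adj _ := Finset.mem_univ _

/-- `G` is a disjoint union of cyclic graphs `C_n` with `n ≥ 4`: the vertex set splits
into pairwise disjoint pieces, edges never cross between pieces, and each piece induces
a graph isomorphic to a `C_n` with `n ≥ 4`. -/
def IsDisjointUnionOfCycles (G : FGraph V) : Prop :=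
  ∃ P : Finset (Finset V),
    (∀ S ∈ P, ↑S ⊆ G.verts) ∧
    (∀ S ∈ P, ∀ T ∈ P, S ≠ T → Disjoint S T) ∧
    (∀ v ∈ G.verts, ∃ S ∈ P, v ∈ S) ∧
    (∀ a b, G.Adj a b → ∀ S ∈ P, a ∈ S → b ∈ S) ∧
    (∀ S ∈ P, ∃ n, 4 ≤ n ∧ Iso (G.induce (· ∈ S)) (cycleGraph n))

/-- Poincaré–Hopf index `i_f(v) = 1 - χ(S^-_f(v))`. -/
noncomputable def pindex (G : FGraph V) (f : V → ℝ) (v : V) : ℤ :=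
  1 - ((G.unitSphere v).induce (fun w => f w < f v)).euler

/-- Curvature `K(v) = Σ_{k ≥ 0} (-1)^k f_{k-1}(S(v))/(k+1)` with `f_{-1} = 1`. -/
noncomputable def curvature (G : FGraph V) (v : V) : ℝ :=
  ∑ k ∈ Finset.range (G.verts.card + 1),
    (-1 : ℝ) ^ k * (if k = 0 then 1 else ((G.unitSphere v).numSimplices k : ℝ)) / (k + 1)

end FGraph

/-- `sign(a + i b) = sign(a) + i sign(b)`. -/
noncomputable def csgn (z : ℂ) : ℂ :=
  ⟨Real.sign z.re, Real.sign z.im⟩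

/-- The set `U = {1+i, 1-i, -1+i, -1-i}` of possible values of `csgn`. -/
noncomputable def signU : Finset ℂ :=
  {1 + Complex.I, 1 - Complex.I, -1 + Complex.I, -1 - Complex.I}

namespace FGraph

variable {V : Type}

/-- The set of values of `sign(ψ - c)` attained on the finite vertex set `x`. -/
noncomputable def signValues (ψ : V → ℂ) (c : ℂ) (x : Finset V) : Finset ℂ :=
  x.image (fun v => csgn (ψ v - c))

/-- The level set `{ψ = c}` of a complex-valued function: the subgraph of the Barycentric
refinement induced by the simplices on which `sign(ψ - c)` takes at least three distinct
values, including `-1+i` and `1-i`. -/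
noncomputable def complexLevelSet (G : FGraph V) (ψ : V → ℂ) (c : ℂ) : FGraph (Finset V) :=
  G.barycentric.induce (fun x =>
    3 ≤ (signValues ψ c x).card ∧
    (-1 + Complex.I) ∈ signValues ψ c x ∧ (1 - Complex.I) ∈ signValues ψ c x)

/-- The level set `{ψ = 0}_e` for a two-element subset `e ⊆ U`: the subgraph of the
Barycentric refinement induced by the simplices on which `sign(ψ)` attains both values
of `e` and at least three distinct values in total. -/
noncomputable def complexLevelSetE (G : FGraph V) (ψ : V → ℂ) (e : Finset ℂ) :
    FGraph (Finset V) :=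
  G.barycentric.induce (fun x =>
    (∀ u ∈ e, u ∈ signValues ψ 0 x) ∧ 3 ≤ (signValues ψ 0 x).card)

/-- `Ψ^{-1}(t)`: the subgraph of the Barycentric refinement induced by the simplices on
which `sign(ψ)` attains all values of `t`. -/
noncomputable def signPreimage (G : FGraph V) (ψ : V → ℂ) (t : Finset ℂ) :
    FGraph (Finset V) :=
  G.barycentric.induce (fun x => ∀ u ∈ t, u ∈ signValues ψ 0 x)

/-- The sign vectors of `F - c` attained on the finite vertex set `x`. -/
noncomputable def vecSignValues {k : ℕ} (F : V → Fin k → ℝ) (c : Fin k → ℝ)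
    (x : Finset V) : Finset (Fin k → ℝ) :=
  x.image (fun v j => Real.sign (F v j - c j))

/-- The level set `{F = c}` of an `ℝ^k`-valued function: the subgraph of the Barycentric
refinement induced by the simplices on which the sign vector of `F - c` takes at least
`k+1` distinct values, including the `k` vectors `(1,…,1,-1,1,…,1)`. -/
noncomputable def vecLevelSet (G : FGraph V) {k : ℕ} (F : V → Fin k → ℝ) (c : Fin k → ℝ) :
    FGraph (Finset V) :=
  G.barycentric.induce (fun x =>
    k + 1 ≤ (vecSignValues F c x).card ∧
    ∀ j : Fin k, (fun i => if i = j then (-1 : ℝ) else 1) ∈ vecSignValues F c x)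

end FGraph

/-- The complete graph on `Fin n`. -/
def completeFGraph (n : ℕ) : FGraph (Fin n) where
  verts := Finset.univ
  Adj a b := a ≠ b
  symm h := h.symm
  loopless a h := h rfl
  mem_of_adj _ := Finset.mem_univ _

/-- Stirling numbers of the second kind. -/
def stirling2 : ℕ → ℕ → ℕ
  | 0, 0 => 1
  | 0, _ + 1 => 0
  | _ + 1, 0 => 0
  | n + 1, m + 1 => (m + 1) * stirling2 n (m + 1) + stirling2 n m

set_option maxHeartbeats 1000000

open Function in
lemma surjective_cons_iff {n : ℕ} {β : Type} (a : β) (g : Fin n → β) :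
    Surjective (Fin.cons a g : Fin (n+1) → β) ↔
      Surjective g ∨ Set.range g = {a}ᶜ := by
  constructor
  · intro h
    by_cases ha : a ∈ Set.range g
    · left
      intro b
      obtain ⟨i, hi⟩ := h b
      induction i using Fin.cases with
      | zero =>
        rw [Fin.cons_zero] at hi
        obtain ⟨j, hj⟩ := ha
        exact ⟨j, hj.trans hi⟩
      | succ i => exact ⟨i, hi⟩
    · right
      ext b
      constructor
      · rintro ⟨i, rfl⟩
        intro hb
        exact ha ⟨i, hb⟩
      · intro hb
        obtain ⟨i, hi⟩ := h b
        induction i using Fin.cases with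
        | zero =>
          rw [Fin.cons_zero] at hi
          exact absurd hi.symm hb
        | succ i => exact ⟨i, hi⟩
  · rintro (h | h) b
    · obtain ⟨i, hi⟩ := h b
      exact ⟨i.succ, by simpa using hi⟩
    · by_cases hb : b = a
      · exact ⟨0, by simp [hb]⟩
      · obtain ⟨i, hi⟩ := (h ▸ (by simpa using hb : b ∈ ({a}ᶜ : Set β)) : b ∈ Set.range g)
        exact ⟨i.succ, by simpa using hi⟩

open Function in
lemma card_surj_aux : ∀ (n : ℕ) (β : Type) [Fintype β],
    Nat.card {f : Fin n → β // Surjective f}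
      = stirling2 n (Fintype.card β) * (Fintype.card β).factorial := by
  intro n
  induction n with
  | zero =>
    intro β _
    rcases isEmpty_or_nonempty β with hβ | hβ
    · have h1 : Nat.card {f : Fin 0 → β // Surjective f} = 1 := by
        rw [Nat.card_eq_one_iff_exists]
        refine ⟨⟨Fin.elim0, fun b => (IsEmpty.false b).elim⟩, ?_⟩
        rintro ⟨f, hf⟩
        exact Subtype.ext (funext fun i => i.elim0)
      rw [h1, Fintype.card_eq_zero]
      simp [stirling2]
    · obtain ⟨m, hm⟩ := Nat.exists_eq_succ_of_ne_zero (Fintype.card_ne_zero (α := β))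
      have he : IsEmpty {f : Fin 0 → β // Surjective f} := by
        refine ⟨fun ⟨f, hf⟩ => ?_⟩
        obtain ⟨i, _⟩ := hf (Classical.arbitrary β)
        exact i.elim0
      rw [Nat.card_of_isEmpty, hm]
      simp [stirling2]
  | succ n ih =>
    intro β _
    rcases isEmpty_or_nonempty β with hβ | hβ
    · have he : IsEmpty {f : Fin (n+1) → β // Surjective f} :=
        ⟨fun ⟨f, hf⟩ => IsEmpty.false (f 0)⟩
      rw [Nat.card_of_isEmpty, Fintype.card_eq_zero]
      simp [stirling2]
    · obtain ⟨m, hm⟩ := Nat.exists_eq_succ_of_ne_zero (Fintype.card_ne_zero (α := β))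
      have e1 : {f : Fin (n+1) → β // Surjective f}
          ≃ {p : β × (Fin n → β) // Surjective p.2 ∨ Set.range p.2 = {p.1}ᶜ} := by
        refine ((Equiv.subtypeEquiv (Fin.consEquiv fun _ : Fin (n+1) => β) ?_)).symm
        rintro ⟨a, g⟩
        exact (surjective_cons_iff a g).symm
      have e2 : {p : β × (Fin n → β) // Surjective p.2 ∨ Set.range p.2 = {p.1}ᶜ}
          ≃ Σ a : β, {g : Fin n → β // Surjective g ∨ Set.range g = {a}ᶜ} :=
        Equiv.subtypeProdEquivSigmaSubtype
          (fun a g => Function.Surjective g ∨ Set.range g = ({a}ᶜ : Set β))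
      rw [Nat.card_congr (e1.trans e2), Nat.card_eq_fintype_card, Fintype.card_sigma]
      simp only [← Nat.card_eq_fintype_card]
      have key : ∀ a : β, Nat.card {g : Fin n → β // Surjective g ∨ Set.range g = {a}ᶜ}
          = stirling2 n (m+1) * (m+1).factorial + stirling2 n m * m.factorial := by
        intro a
        have hd : Disjoint (fun g : Fin n → β => Surjective g)
            (fun g => Set.range g = {a}ᶜ) := by
          rw [Pi.disjoint_iff]
          intro g
          rw [Prop.disjoint_iff]
          rintro ⟨h1, h2⟩
          have : a ∈ Set.range g := h1.range_eq ▸ Set.mem_univ a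
          rw [h2] at this
          exact this rfl
        rw [Nat.card_congr (subtypeOrEquiv _ _ hd), Nat.card_sum]
        congr 1
        · rw [ih, hm]
        · have e3 : {g : Fin n → β // Set.range g = {a}ᶜ}
              ≃ {h : Fin n → {b : β // b ≠ a} // Surjective h} := by
            refine ⟨fun ⟨g, hg⟩ => ⟨fun i => ⟨g i, ?_⟩, ?_⟩,
              fun ⟨h, hh⟩ => ⟨fun i => (h i).1, ?_⟩, ?_, ?_⟩
            · intro h
              have : g i ∈ Set.range g := ⟨i, rfl⟩
              rw [hg] at this
              exact this h
            · rintro ⟨b, hb⟩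
              have : b ∈ Set.range g := by rw [hg]; exact hb
              obtain ⟨i, hi⟩ := this
              exact ⟨i, Subtype.ext hi⟩
            · ext b
              constructor
              · rintro ⟨i, rfl⟩
                exact (h i).2
              · intro hb
                obtain ⟨i, hi⟩ := hh ⟨b, hb⟩
                exact ⟨i, congrArg Subtype.val hi⟩
            · rintro ⟨g, hg⟩; rfl
            · rintro ⟨h, hh⟩; rfl
          rw [Nat.card_congr e3, ih]
          have hc : Fintype.card {b : β // b ≠ a} = m := by
            rw [Fintype.card_subtype_compl, Fintype.card_subtype_eq, hm]
            omega
          rw [hc]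
      rw [Finset.sum_congr rfl (fun a _ => key a)]
      have hb2 : Nat.card β = m + 1 := by rw [Nat.card_eq_fintype_card, hm]
      rw [Finset.sum_const, Finset.card_univ, hm, hb2]
      simp only [stirling2, Nat.factorial, smul_eq_mul, Nat.succ_eq_add_one]
      ring

section Chains

open Function

variable {V : Type}

/-- chains of `m` nonempty subsets of `x`, containing `x` itself. -/
noncomputable def chainsTop (x : Finset V) (m : ℕ) : Finset (Finset (Finset V)) :=
  (x.powerset.erase ∅).powerset.filter
    (fun s => s.card = m ∧ (∀ a ∈ s, ∀ b ∈ s, a ≠ b → a ⊆ b ∨ b ⊆ a) ∧ x ∈ s)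

lemma mem_chainsTop {x : Finset V} {m : ℕ} {s : Finset (Finset V)} :
    s ∈ chainsTop x m ↔
      (∀ y ∈ s, y.Nonempty ∧ y ⊆ x) ∧ s.card = m ∧
        (∀ a ∈ s, ∀ b ∈ s, a ≠ b → a ⊆ b ∨ b ⊆ a) ∧ x ∈ s := by
  unfold chainsTop
  rw [Finset.mem_filter, Finset.mem_powerset]
  constructor
  · rintro ⟨h1, h2⟩
    refine ⟨fun y hy => ?_, h2⟩
    have := h1 hy
    rw [Finset.mem_erase, Finset.mem_powerset] at this
    exact ⟨Finset.nonempty_iff_ne_empty.mpr this.1, this.2⟩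
  · rintro ⟨h1, h2⟩
    refine ⟨fun y hy => ?_, h2⟩
    rw [Finset.mem_erase, Finset.mem_powerset]
    exact ⟨Finset.nonempty_iff_ne_empty.mp (h1 y hy).1, (h1 y hy).2⟩

/-- number of sets in `s` not containing `v` -/
noncomputable def cnt (s : Finset (Finset V)) (v : V) : ℕ :=
  (s.filter (fun z => v ∉ z)).card

/-- rank of `y` in `s` -/
noncomputable def rk (s : Finset (Finset V)) (y : Finset V) : ℕ :=
  (s.filter (fun z => z ⊂ y)).card

lemma rk_lt_card {s : Finset (Finset V)} {y : Finset V} (hy : y ∈ s) :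
    rk s y < s.card := by
  refine Finset.card_lt_card ?_
  rw [Finset.ssubset_iff_of_subset (Finset.filter_subset _ _)]
  exact ⟨y, hy, fun h => ssubset_irrefl y (Finset.mem_filter.mp h).2⟩

lemma cnt_lt_card {s : Finset (Finset V)} {x : Finset V} (hx : x ∈ s) {v : V} (hv : v ∈ x) :
    cnt s v < s.card := by
  refine Finset.card_lt_card ?_
  rw [Finset.ssubset_iff_of_subset (Finset.filter_subset _ _)]
  exact ⟨x, hx, fun h => (Finset.mem_filter.mp h).2 hv⟩

lemma mem_iff_cnt_le_rk {s : Finset (Finset V)}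
    (hchain : ∀ a ∈ s, ∀ b ∈ s, a ≠ b → a ⊆ b ∨ b ⊆ a)
    {y : Finset V} (hy : y ∈ s) (v : V) :
    v ∈ y ↔ cnt s v ≤ rk s y := by
  constructor
  · intro hv
    apply Finset.card_le_card
    intro z hz
    rw [Finset.mem_filter] at hz ⊢
    obtain ⟨hzs, hvz⟩ := hz
    refine ⟨hzs, ?_⟩
    have hne : z ≠ y := fun h => hvz (h ▸ hv)
    rcases hchain z hzs y hy hne with h | h
    · exact Finset.ssubset_iff_subset_ne.mpr ⟨h, hne⟩
    · exact absurd (h hv) hvz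
  · intro h
    by_contra hv
    have hyn : y ∉ s.filter (fun z => z ⊂ y) := fun h' =>
      ssubset_irrefl y (Finset.mem_filter.mp h').2
    have hsub : insert y (s.filter (fun z => z ⊂ y)) ⊆ s.filter (fun z => v ∉ z) := by
      intro z hz
      rw [Finset.mem_insert] at hz
      rcases hz with rfl | hz
      · exact Finset.mem_filter.mpr ⟨hy, hv⟩
      · rw [Finset.mem_filter] at hz ⊢
        exact ⟨hz.1, fun hvz => hv (hz.2.subset hvz)⟩
    have hc := Finset.card_le_card hsub
    rw [Finset.card_insert_of_notMem hyn] at hc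
    unfold cnt rk at h
    omega

/-- block of a function: vertices of `x` with value ≤ i -/
noncomputable def blk (x : Finset V) {m : ℕ} (f : {v // v ∈ x} → Fin m) (i : ℕ) : Finset V :=
  x.filter (fun v => ∀ h : v ∈ x, ((f ⟨v, h⟩ : Fin m) : ℕ) ≤ i)

lemma mem_blk {x : Finset V} {m : ℕ} {f : {v // v ∈ x} → Fin m} {i : ℕ}
    (v : {v // v ∈ x}) : v.1 ∈ blk x f i ↔ (f v : ℕ) ≤ i := by
  unfold blk
  rw [Finset.mem_filter]
  constructor
  · rintro ⟨-, h⟩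
    simpa using h v.2
  · intro h
    exact ⟨v.2, fun h' => by simpa using h⟩

lemma blk_mono {x : Finset V} {m : ℕ} {f : {v // v ∈ x} → Fin m} {i j : ℕ} (hij : i ≤ j) :
    blk x f i ⊆ blk x f j := by
  intro v hv
  unfold blk at hv ⊢
  rw [Finset.mem_filter] at hv ⊢
  exact ⟨hv.1, fun h => le_trans (hv.2 h) hij⟩

lemma blk_injective {x : Finset V} {m : ℕ} {f : {v // v ∈ x} → Fin m}
    (hf : Surjective f) : Injective (fun i : Fin m => blk x f (i : ℕ)) := by
  intro i j hij
  by_contra hne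
  wlog hlt : i < j generalizing i j
  · exact this hij.symm (Ne.symm hne) (lt_of_le_of_ne (not_lt.mp hlt) (Ne.symm hne))
  · obtain ⟨v, hv⟩ := hf j
    have h1 : v.1 ∈ blk x f (j : ℕ) := (mem_blk v).mpr (by rw [hv])
    have h2 : v.1 ∉ blk x f (i : ℕ) := by
      rw [mem_blk v, hv]
      exact not_le.mpr hlt
    simp only at hij
    rw [← hij] at h1
    exact h2 h1
end Chains

section Chains2
open Function
variable {V : Type}

lemma image_blk_eq {x : Finset V} {m : ℕ} {s : Finset (Finset V)}
    (hs : s ∈ chainsTop x m) {g : {v // v ∈ x} → Fin m}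
    (hg : ∀ v, (g v : ℕ) = cnt s v.1) :
    Finset.image (fun i : Fin m => blk x g (i : ℕ)) Finset.univ = s := by
  obtain ⟨helem, hcard, hchain, hxs⟩ := mem_chainsTop.mp hs
  have hsub : s ⊆ Finset.image (fun i : Fin m => blk x g (i : ℕ)) Finset.univ := by
    intro y hy
    rw [Finset.mem_image]
    refine ⟨⟨rk s y, hcard ▸ rk_lt_card hy⟩, Finset.mem_univ _, ?_⟩
    ext v
    constructor
    · intro hv
      have hvx : v ∈ x := (Finset.filter_subset _ _) hv
      have := (mem_blk (f := g) ⟨v, hvx⟩).mp hv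
      rw [hg] at this
      exact (mem_iff_cnt_le_rk hchain hy v).mpr this
    · intro hv
      have hvx : v ∈ x := (helem y hy).2 hv
      refine (mem_blk (f := g) ⟨v, hvx⟩).mpr ?_
      rw [hg]
      exact (mem_iff_cnt_le_rk hchain hy v).mp hv
  refine (Finset.eq_of_subset_of_card_le hsub ?_).symm
  calc (Finset.image (fun i : Fin m => blk x g (i : ℕ)) Finset.univ).card
      ≤ (Finset.univ : Finset (Fin m)).card := Finset.card_image_le
    _ = m := by rw [Finset.card_univ, Fintype.card_fin]
    _ = s.card := hcard.symm

lemma surjective_of_cnt {x : Finset V} {m : ℕ} {s : Finset (Finset V)}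
    (hs : s ∈ chainsTop x m) {g : {v // v ∈ x} → Fin m}
    (hg : ∀ v, (g v : ℕ) = cnt s v.1) : Surjective g := by
  obtain ⟨helem, hcard, hchain, hxs⟩ := mem_chainsTop.mp hs
  have himg := image_blk_eq hs hg
  have hinj : Set.InjOn (fun i : Fin m => blk x g (i : ℕ)) ↑(Finset.univ : Finset (Fin m)) := by
    apply Finset.injOn_of_card_image_eq
    rw [himg, hcard, Finset.card_univ, Fintype.card_fin]
  have hbi : ∀ j : Fin m, blk x g (j : ℕ) ∈ s := fun j => by
    rw [← himg]; exact Finset.mem_image_of_mem _ (Finset.mem_univ j)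
  intro i
  rcases hiv : (i : ℕ) with _ | j
  · obtain ⟨v, hv⟩ := (helem _ (hbi i)).1
    have hvx : v ∈ x := (Finset.filter_subset _ _) hv
    have := (mem_blk (f := g) ⟨v, hvx⟩).mp hv
    exact ⟨⟨v, hvx⟩, Fin.ext (by omega)⟩
  · have hjm : j < m := by have := i.2; omega
    have hne : blk x g ((⟨j, hjm⟩ : Fin m) : ℕ) ≠ blk x g (i : ℕ) := by
      intro h
      have := hinj (Finset.mem_coe.mpr (Finset.mem_univ _))
        (Finset.mem_coe.mpr (Finset.mem_univ _)) h
      rw [Fin.ext_iff] at this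
      simp only at this
      omega
    have hss : blk x g ((⟨j, hjm⟩ : Fin m) : ℕ) ⊂ blk x g (i : ℕ) :=
      Finset.ssubset_iff_subset_ne.mpr ⟨by rw [hiv]; exact blk_mono (by simp only [Fin.val_mk]; omega), hne⟩
    obtain ⟨v, hv1, hv2⟩ := Finset.exists_of_ssubset hss
    have hvx : v ∈ x := (Finset.filter_subset _ _) hv1
    have h1 := (mem_blk (f := g) ⟨v, hvx⟩).mp hv1
    have h2 : ¬ ((g ⟨v, hvx⟩ : ℕ) ≤ j) := fun h => hv2 ((mem_blk (f := g) ⟨v, hvx⟩).mpr h)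
    exact ⟨⟨v, hvx⟩, Fin.ext (by omega)⟩

lemma image_blk_mem {x : Finset V} {m : ℕ} (hm : 0 < m) {f : {v // v ∈ x} → Fin m}
    (hf : Surjective f) :
    Finset.image (fun i : Fin m => blk x f (i : ℕ)) Finset.univ ∈ chainsTop x m := by
  rw [mem_chainsTop]
  refine ⟨?_, ?_, ?_, ?_⟩
  · intro y hy
    rw [Finset.mem_image] at hy
    obtain ⟨i, -, rfl⟩ := hy
    obtain ⟨v, hv⟩ := hf i
    exact ⟨⟨v.1, (mem_blk v).mpr (by rw [hv])⟩, Finset.filter_subset _ _⟩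
  · rw [Finset.card_image_of_injective _ (blk_injective hf), Finset.card_univ,
      Fintype.card_fin]
  · intro a ha b hb hab
    rw [Finset.mem_image] at ha hb
    obtain ⟨i, -, rfl⟩ := ha
    obtain ⟨j, -, rfl⟩ := hb
    rcases le_total (i : ℕ) (j : ℕ) with h | h
    · exact Or.inl (blk_mono h)
    · exact Or.inr (blk_mono h)
  · rw [Finset.mem_image]
    refine ⟨⟨m - 1, by omega⟩, Finset.mem_univ _, ?_⟩
    apply Finset.filter_true_of_mem
    intro v hv h
    have := (f ⟨v, h⟩).2
    simp only
    omega

lemma cnt_image_blk {x : Finset V} {m : ℕ} {f : {v // v ∈ x} → Fin m}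
    (hf : Surjective f) (v : {v // v ∈ x}) :
    cnt (Finset.image (fun i : Fin m => blk x f (i : ℕ)) Finset.univ) v.1 = (f v : ℕ) := by
  unfold cnt
  rw [Finset.filter_image, Finset.card_image_of_injOn ((blk_injective hf).injOn)]
  have hcond : ∀ i : Fin m, (v.1 ∉ blk x f (i : ℕ)) ↔ i < f v := by
    intro i
    rw [mem_blk (f := f) v, not_le, Fin.lt_def]
  rw [Finset.filter_congr (fun i _ => by rw [hcond])]
  have : (Finset.univ.filter (fun i : Fin m => i < f v)) = Finset.Iio (f v) := by
    ext i
    simp [Finset.mem_Iio]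
  rw [this, Fin.card_Iio]

end Chains2

section Chains3
open Function
variable {V : Type}

open Function in
lemma card_surj_fun (x : Finset V) (m : ℕ) :
    (Finset.univ.filter (fun f : {v // v ∈ x} → Fin m => Surjective f)).card
      = stirling2 x.card m * m.factorial := by
  rw [← Fintype.card_subtype, ← Nat.card_eq_fintype_card]
  have e : {f : {v // v ∈ x} → Fin m // Surjective f}
      ≃ {f : Fin x.card → Fin m // Surjective f} := by
    refine Equiv.subtypeEquiv (Equiv.arrowCongr x.equivFin (Equiv.refl (Fin m))) ?_
    intro f
    constructor
    · intro hf j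
      obtain ⟨v, hv⟩ := hf j
      exact ⟨x.equivFin v, by simp [Equiv.arrowCongr, hv]⟩
    · intro hf j
      obtain ⟨i, hi⟩ := hf j
      refine ⟨x.equivFin.symm i, ?_⟩
      simpa [Equiv.arrowCongr] using hi
  rw [Nat.card_congr e, card_surj_aux, Fintype.card_fin]

lemma chainsTop_card (x : Finset V) (m : ℕ) (hm : 0 < m) :
    (chainsTop x m).card = stirling2 x.card m * m.factorial := by
  rw [← card_surj_fun x m]
  refine Finset.card_bij'
    (fun s hs => fun v => (⟨cnt s v.1, by
        obtain ⟨helem, hcard, hchain, hxs⟩ := mem_chainsTop.mp hs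
        exact hcard ▸ cnt_lt_card hxs v.2⟩ : Fin m))
    (fun f hf => Finset.image (fun i : Fin m => blk x f (i : ℕ)) Finset.univ)
    ?_ ?_ ?_ ?_
  · intro s hs
    rw [Finset.mem_filter]
    exact ⟨Finset.mem_univ _, surjective_of_cnt hs (fun v => rfl)⟩
  · intro f hf
    exact image_blk_mem hm (Finset.mem_filter.mp hf).2
  · intro s hs
    exact image_blk_eq hs (fun v => rfl)
  · intro f hf
    funext v
    apply Fin.ext
    exact cnt_image_blk (Finset.mem_filter.mp hf).2 v

lemma sup_id_mem {s : Finset (Finset V)} (hne : s.Nonempty)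
    (hchain : ∀ a ∈ s, ∀ b ∈ s, a ≠ b → a ⊆ b ∨ b ⊆ a) : s.sup id ∈ s := by
  have w : ∀ a ∈ (↑s : Set (Finset V)), ∀ b ∈ (↑s : Set (Finset V)), a ⊔ b ∈ (↑s : Set (Finset V)) := by
    intro a ha b hb
    rcases eq_or_ne a b with rfl | hne'
    · simpa using ha
    · rcases hchain a ha b hb hne' with h | h
      · rw [sup_eq_right.mpr (Finset.le_iff_subset.mpr h)]; exact hb
      · rw [sup_eq_left.mpr (Finset.le_iff_subset.mpr h)]; exact ha
  have := Finset.sup'_mem (↑s : Set (Finset V)) w s hne id (fun b hb => hb)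
  rwa [Finset.sup'_eq_sup] at this

end Chains3

lemma isSimplex_subset {V : Type} (G : FGraph V) {x y : Finset V}
    (hx : G.IsSimplex x) (hyx : y ⊆ x) (hne : y.Nonempty) : G.IsSimplex y := by
  refine ⟨hne, ?_, fun a ha b hb hab => hx.2.2 a (hyx ha) b (hyx hb) hab⟩
  exact subset_trans (Finset.coe_subset.mpr hyx) hx.2.1

/-- The f-vector of the Barycentric refinement: the number of
`k`-dimensional simplices of `G₁` equals `Σ_{j ≥ 1} f_{j-1}(G) · S(j, k+1) · (k+1)!`,
where `S(j, m)` are the Stirling numbers of the second kind. -/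
theorem barycentric_f_vector {V : Type} (G : FGraph V) :
    ∀ k : ℕ,
      G.barycentric.numSimplices (k + 1) =
        ∑ j ∈ Finset.Icc 1 G.verts.card,
          G.numSimplices j * stirling2 j (k + 1) * Nat.factorial (k + 1) := by
  intro k
  classical
  set B := G.verts.powerset.filter (fun x => G.IsSimplex x) with hB
  have hGv : G.barycentric.verts = B := rfl
  set A := G.barycentric.verts.powerset.filter
      (fun s => G.barycentric.IsSimplex s ∧ s.card = k + 1) with hAdef
  have hA : G.barycentric.numSimplices (k + 1) = A.card := rfl
  -- facts about members of A
  have hAfacts : ∀ s ∈ A, (∀ y ∈ s, G.IsSimplex y) ∧ s.Nonempty ∧ s.card = k + 1 ∧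
      (∀ a ∈ s, ∀ b ∈ s, a ≠ b → a ⊆ b ∨ b ⊆ a) := by
    intro s hs
    rw [hAdef, Finset.mem_filter, Finset.mem_powerset] at hs
    obtain ⟨hsub, hsimp, hcard⟩ := hs
    refine ⟨?_, hsimp.1, hcard, ?_⟩
    · intro y hy
      have := hsub hy
      rw [hGv, hB, Finset.mem_filter] at this
      exact this.2
    · intro a ha b hb hab
      have hadj := hsimp.2.2 a ha b hb hab
      exact hadj.2.2.imp subset_of_ssubset subset_of_ssubset
  have hmaps : ∀ s ∈ A, s.sup id ∈ B := by
    intro s hs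
    obtain ⟨hsimp, hne, hcard, hchain⟩ := hAfacts s hs
    have hmem : s.sup id ∈ s := sup_id_mem hne hchain
    rw [hAdef, Finset.mem_filter, Finset.mem_powerset] at hs
    have := hs.1 hmem
    rwa [hGv] at this
  have hfiber : ∀ x ∈ B, A.filter (fun s => s.sup id = x) = chainsTop x (k + 1) := by
    intro x hx
    rw [hB, Finset.mem_filter] at hx
    obtain ⟨hxsub, hxsimp⟩ := hx
    rw [Finset.mem_powerset] at hxsub
    ext s
    rw [Finset.mem_filter, mem_chainsTop]
    constructor
    · rintro ⟨hsA, hsup⟩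
      obtain ⟨hsimp, hne, hcard, hchain⟩ := hAfacts s hsA
      refine ⟨?_, hcard, hchain, ?_⟩
      · intro y hy
        refine ⟨(hsimp y hy).1, ?_⟩
        have : id y ≤ s.sup id := Finset.le_sup hy
        rw [hsup] at this
        exact this
      · rw [← hsup]
        exact sup_id_mem hne hchain
    · rintro ⟨helem, hcard, hchain, hxs⟩
      have hysimp : ∀ y ∈ s, G.IsSimplex y := fun y hy =>
        isSimplex_subset G hxsimp (helem y hy).2 (helem y hy).1
      have hyverts : ∀ y ∈ s, y ∈ G.barycentric.verts := by
        intro y hy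
        rw [hGv, hB, Finset.mem_filter, Finset.mem_powerset]
        exact ⟨(helem y hy).2.trans hxsub, hysimp y hy⟩
      have hsne : s.Nonempty := Finset.card_pos.mp (by omega)
      refine ⟨Finset.mem_filter.mpr ⟨Finset.mem_powerset.mpr hyverts, ?_, hcard⟩, ?_⟩
      · refine ⟨hsne, ?_, ?_⟩
        · exact fun y hy => hyverts y hy
        · intro a ha b hb hab
          refine ⟨hysimp a ha, hysimp b hb, ?_⟩
          rcases hchain a ha b hb hab with h | h
          · exact Or.inl (Finset.ssubset_iff_subset_ne.mpr ⟨h, hab⟩)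
          · exact Or.inr (Finset.ssubset_iff_subset_ne.mpr ⟨h, hab.symm⟩)
      · refine le_antisymm ?_ ?_
        · exact Finset.sup_le (fun y hy => (helem y hy).2)
        · exact Finset.le_sup (f := id) hxs
  rw [hA, Finset.card_eq_sum_card_fiberwise hmaps]
  rw [Finset.sum_congr rfl (fun x hx => by
    rw [hfiber x hx, chainsTop_card x (k + 1) (Nat.succ_pos k)])]
  have hmaps2 : ∀ x ∈ B, x.card ∈ Finset.Icc 1 G.verts.card := by
    intro x hx
    rw [hB, Finset.mem_filter] at hx
    rw [Finset.mem_Icc]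
    constructor
    · exact Nat.one_le_iff_ne_zero.mpr (Finset.card_ne_zero_of_mem (hx.2.1.choose_spec))
    · exact Finset.card_le_card (Finset.mem_powerset.mp hx.1)
  rw [← Finset.sum_fiberwise_of_maps_to hmaps2
    (fun x => stirling2 x.card (k + 1) * (k + 1).factorial)]
  refine Finset.sum_congr rfl ?_
  intro j hj
  rw [Finset.sum_congr rfl (fun x hx => by rw [(Finset.mem_filter.mp hx).2])]
  rw [Finset.sum_const, smul_eq_mul]
  have hnum : (B.filter (fun x => x.card = j)).card = G.numSimplices j := by
    rw [hB, Finset.filter_filter]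
    rfl
  rw [hnum, mul_assoc]
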